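/- Let m : ℝ → ℝ⁵ be a C^∞ curve lying in the light cone, i.e. ⟨m(t), m(t)⟩ = 0 for all t, let φ : ℝ → ℝ be C^∞, and define σ(t) = φ(t)·(m(t) × m'(t) × m''(t) × m'''(t)) using the Lorentz vector product. Then: (i) ⟨m(t), σ(t) + σ''(t)⟩ = 0 for all t; and (ii) if at some t one has m(t) ≠ 0, σ(t) + σ''(t) ≠ 0, and ⟨σ(t) + σ''(t), σ(t) + σ''(t)⟩ = 0, then there exists c ≠ 0 with m(t) = c·(σ(t) + σ''(t)). (Thus a point of the original curve is recovered from the curve of osculating spheres as m = c(σ + σ̈).) -/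

import Mathlib

set_option maxRecDepth 8000
open scoped ContDiff


noncomputable section

/-- The Minkowski bilinear form on `ℝ⁵₁`:
`⟨x,y⟩ = -x₀y₀ + x₁y₁ + x₂y₂ + x₃y₃ + x₄y₄`. -/
def mink5 (x y : Fin 5 → ℝ) : ℝ :=
  -(x 0 * y 0) + x 1 * y 1 + x 2 * y 2 + x 3 * y 3 + x 4 * y 4

/-- The standard basis vector `eⁱ` of `ℝ⁵`. -/
def stdb (i : Fin 5) : Fin 5 → ℝ := fun k => if k = i then 1 else 0

/-- The Lorentz vector product `w = u¹×u²×u³×u⁴` of four vectors of `ℝ⁵₁`, given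
componentwise by `w₀ = -det(e⁰ u¹ u² u³ u⁴)` and `wᵢ = det(eⁱ u¹ u² u³ u⁴)` for
`i = 1,…,4`, where the determinants are of the `5×5` matrices having the indicated
columns. -/
def lorentzProd (u : Fin 4 → Fin 5 → ℝ) : Fin 5 → ℝ := fun i =>
  (if i = 0 then (-1 : ℝ) else 1) *
    (Matrix.of fun k j : Fin 5 => (Fin.cons (stdb i) u : Fin 5 → Fin 5 → ℝ) j k).det

namespace Stmt9Aux

/-- Row-determinant with first row `v`. -/
def D (u : Fin 4 → Fin 5 → ℝ) (v : Fin 5 → ℝ) : ℝ :=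
  (Matrix.of (Fin.cons v u : Fin 5 → Fin 5 → ℝ)).det

lemma lorentzProd_eq (u : Fin 4 → Fin 5 → ℝ) (i : Fin 5) :
    lorentzProd u i = (if i = 0 then (-1 : ℝ) else 1) * D u (stdb i) := by
  unfold lorentzProd D
  have h : (Matrix.of fun k j : Fin 5 => (Fin.cons (stdb i) u : Fin 5 → Fin 5 → ℝ) j k)
      = (Matrix.of (Fin.cons (stdb i) u : Fin 5 → Fin 5 → ℝ)).transpose := by
    ext k j; rfl
  rw [h, Matrix.det_transpose]

lemma updateRow_cons (u : Fin 4 → Fin 5 → ℝ) (v : Fin 5 → ℝ) :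
    (Matrix.of (Fin.cons (0 : Fin 5 → ℝ) u : Fin 5 → Fin 5 → ℝ)).updateRow 0 v
      = Matrix.of (Fin.cons v u : Fin 5 → Fin 5 → ℝ) := by
  ext i j
  refine Fin.cases ?_ ?_ i
  · simp
  · intro l
    simp [Matrix.updateRow_ne (Fin.succ_ne_zero l)]

lemma D_linear (u : Fin 4 → Fin 5 → ℝ) (x : Fin 5 → ℝ) :
    D u x = ∑ i : Fin 5, x i * D u (stdb i) := by
  have hx : x = ∑ i : Fin 5, x i • stdb i := by
    funext k
    simp [stdb, Finset.sum_apply]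
  set M0 : Matrix (Fin 5) (Fin 5) ℝ := Matrix.of (Fin.cons (0 : Fin 5 → ℝ) u) with hM0
  have hD : ∀ v : Fin 5 → ℝ, D u v = (M0.updateRow 0 v).det := by
    intro v; rw [hM0, updateRow_cons]; rfl
  have gen : ∀ s : Finset (Fin 5), ∀ g : Fin 5 → Fin 5 → ℝ,
      (M0.updateRow 0 (∑ i ∈ s, g i)).det = ∑ i ∈ s, (M0.updateRow 0 (g i)).det := by
    intro s
    induction s using Finset.induction_on with
    | empty =>
        intro g
        simp only [Finset.sum_empty]
        exact Matrix.det_eq_zero_of_row_eq_zero 0 (fun j => by simp)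
    | insert k s hk ih =>
        intro g
        rw [Finset.sum_insert hk, Matrix.det_updateRow_add, ih, Finset.sum_insert hk]
  calc D u x = (M0.updateRow 0 x).det := hD x
    _ = (M0.updateRow 0 (∑ i : Fin 5, x i • stdb i)).det := by rw [← hx]
    _ = ∑ i : Fin 5, (M0.updateRow 0 (x i • stdb i)).det := gen _ _
    _ = ∑ i : Fin 5, x i * D u (stdb i) := by
        refine Finset.sum_congr rfl fun i _ => ?_
        rw [Matrix.det_updateRow_smul, ← hD]

lemma mink5_lorentzProd (x : Fin 5 → ℝ) (u : Fin 4 → Fin 5 → ℝ) :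
    mink5 x (lorentzProd u) = D u x := by
  rw [D_linear]
  simp only [mink5, lorentzProd_eq, Fin.sum_univ_five,
    show ((1:Fin 5) = 0) = False by simp,
    show ((2:Fin 5) = 0) = False by simp, show ((3:Fin 5) = 0) = False by simp,
    show ((4:Fin 5) = 0) = False by simp, if_true, if_false, reduceIte]
  ring

lemma mink5_lorentzProd_self (u : Fin 4 → Fin 5 → ℝ) (j : Fin 4) :
    mink5 (u j) (lorentzProd u) = 0 := by
  rw [mink5_lorentzProd]
  refine Matrix.det_zero_of_row_eq (M := Matrix.of (Fin.cons (u j) u : Fin 5 → Fin 5 → ℝ))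
    (i := 0) (j := j.succ) (Fin.succ_ne_zero j).symm ?_
  show (Fin.cons (u j) u : Fin 5 → Fin 5 → ℝ) 0 = (Fin.cons (u j) u : Fin 5 → Fin 5 → ℝ) j.succ
  simp

lemma mink5_smul (x : Fin 5 → ℝ) (c : ℝ) (w : Fin 5 → ℝ) :
    mink5 x (c • w) = c * mink5 x w := by
  simp [mink5]; ring

lemma mink5_add_right (x v w : Fin 5 → ℝ) :
    mink5 x (v + w) = mink5 x v + mink5 x w := by
  simp [mink5]; ring

lemma hasDerivAt_apply {a : ℝ → Fin 5 → ℝ} {a' : Fin 5 → ℝ} {t : ℝ}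
    (ha : HasDerivAt a a' t) (i : Fin 5) :
    HasDerivAt (fun s => a s i) (a' i) t := by
  have := (ContinuousLinearMap.proj (R := ℝ) (φ := fun _ : Fin 5 => ℝ) i).hasFDerivAt.comp_hasDerivAt t ha
  exact hasDerivAt_pi.1 ha i

lemma hasDerivAt_mink5 {a b : ℝ → Fin 5 → ℝ} {a' b' : Fin 5 → ℝ} {t : ℝ}
    (ha : HasDerivAt a a' t) (hb : HasDerivAt b b' t) :
    HasDerivAt (fun s => mink5 (a s) (b s)) (mink5 a' (b t) + mink5 (a t) b') t := by
  unfold mink5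
  have h0 := ((hasDerivAt_apply ha 0).mul (hasDerivAt_apply hb 0)).neg
  have h1 := (hasDerivAt_apply ha 1).mul (hasDerivAt_apply hb 1)
  have h2 := (hasDerivAt_apply ha 2).mul (hasDerivAt_apply hb 2)
  have h3 := (hasDerivAt_apply ha 3).mul (hasDerivAt_apply hb 3)
  have h4 := (hasDerivAt_apply ha 4).mul (hasDerivAt_apply hb 4)
  have := (((h0.add h1).add h2).add h3).add h4
  convert this using 1 <;> first | rfl | ring

lemma contDiff_det_entries {f : ℝ → Fin 5 → Fin 5 → ℝ}
    (h : ∀ i j, ContDiff ℝ ∞ fun t => f t i j) :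
    ContDiff ℝ ∞ fun t => (Matrix.of (f t)).det := by
  simp only [Matrix.det_apply]
  apply ContDiff.sum
  intro p _
  simp only [Units.smul_def, zsmul_eq_mul, Matrix.of_apply]
  exact contDiff_const.mul (by simpa using contDiff_prod (fun i (_ : i ∈ Finset.univ) => h (p i) i))

/-- Two nonzero lightlike vectors that are `mink5`-orthogonal are proportional. -/
lemma lightlike_orthogonal (x y : Fin 5 → ℝ)
    (hx : mink5 x x = 0) (hy : mink5 y y = 0) (hxy : mink5 x y = 0)
    (hx0 : x ≠ 0) (hy0 : y ≠ 0) : ∃ c : ℝ, c ≠ 0 ∧ x = c • y := by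
  have zero_of : ∀ z : Fin 5 → ℝ, mink5 z z = 0 → z 0 = 0 → z = 0 := by
    intro z hz hz0
    unfold mink5 at hz
    rw [hz0] at hz
    have h1 : z 1 = 0 := by nlinarith [sq_nonneg (z 1), sq_nonneg (z 2), sq_nonneg (z 3), sq_nonneg (z 4)]
    have h2 : z 2 = 0 := by nlinarith [sq_nonneg (z 1), sq_nonneg (z 2), sq_nonneg (z 3), sq_nonneg (z 4)]
    have h3 : z 3 = 0 := by nlinarith [sq_nonneg (z 1), sq_nonneg (z 2), sq_nonneg (z 3), sq_nonneg (z 4)]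
    have h4 : z 4 = 0 := by nlinarith [sq_nonneg (z 1), sq_nonneg (z 2), sq_nonneg (z 3), sq_nonneg (z 4)]
    funext k
    fin_cases k <;> simp_all
  have hyne : y 0 ≠ 0 := fun h => hy0 (zero_of y hy h)
  have hxne : x 0 ≠ 0 := fun h => hx0 (zero_of x hx h)
  set c := x 0 / y 0 with hc
  have hcy : x 0 = c * y 0 := (div_mul_cancel₀ (x 0) hyne).symm
  have hz0 : (x - c • y) 0 = 0 := by
    show x 0 - c * y 0 = 0
    rw [hcy]; ring
  have hzz : mink5 (x - c • y) (x - c • y) = mink5 x x - 2 * c * mink5 x y + c ^ 2 * mink5 y y := by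
    simp [mink5]; ring
  rw [hx, hy, hxy] at hzz
  have : x - c • y = 0 := zero_of _ (by rw [hzz]; ring) hz0
  refine ⟨c, div_ne_zero hxne hyne, ?_⟩
  have := sub_eq_zero.mp this
  exact this

end Stmt9Aux

open Stmt9Aux in
/-- Let `m` be a smooth curve in the light cone of `ℝ⁵₁` and
`σ = φ·(m×m'×m''×m''')` (a scalar multiple of the Lorentz vector product of `m` and its
first three derivatives, as is the curve of osculating spheres). Then
(i) `⟨m, σ + σ''⟩ = 0`, and (ii) if `m(t) ≠ 0`, `σ(t)+σ''(t) ≠ 0` and `σ(t)+σ''(t)` is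
light-like, then `m(t) = c·(σ(t)+σ''(t))` for some `c ≠ 0`: the original curve is
recovered from the curve of osculating spheres. -/
theorem point_recovered_from_osculating_spheres
    (m : ℝ → Fin 5 → ℝ) (hm : ContDiff ℝ (⊤ : ℕ∞) m)
    (hlight : ∀ t, mink5 (m t) (m t) = 0)
    (φ : ℝ → ℝ) (hφ : ContDiff ℝ (⊤ : ℕ∞) φ)
    (σ : ℝ → Fin 5 → ℝ)
    (hσ : ∀ t, σ t = φ t • lorentzProd (fun k : Fin 4 => iteratedDeriv k m t)) :
    (∀ t : ℝ, mink5 (m t) (σ t + iteratedDeriv 2 σ t) = 0) ∧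
    (∀ t : ℝ, m t ≠ 0 → σ t + iteratedDeriv 2 σ t ≠ 0 →
      mink5 (σ t + iteratedDeriv 2 σ t) (σ t + iteratedDeriv 2 σ t) = 0 →
      ∃ c : ℝ, c ≠ 0 ∧ m t = c • (σ t + iteratedDeriv 2 σ t)) := by
  -- smoothness of iterated derivatives of m
  have hm' : ContDiff ℝ ∞ m := hm.of_le (by simp)
  have hφ' : ContDiff ℝ ∞ φ := hφ.of_le (by simp)
  have hA : ∀ k : ℕ, ContDiff ℝ ∞ (iteratedDeriv k m) := by
    intro k
    rw [iteratedDeriv_eq_iterate]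
    exact ContDiff.iterate_deriv k hm'
  -- smoothness of σ
  have hσeq : σ = fun t => φ t • lorentzProd (fun k : Fin 4 => iteratedDeriv k m t) :=
    funext hσ
  have hL : ContDiff ℝ ∞ fun t => lorentzProd (fun k : Fin 4 => iteratedDeriv k m t) := by
    rw [contDiff_pi]
    intro i
    unfold lorentzProd
    apply ContDiff.mul contDiff_const
    apply contDiff_det_entries
    intro k j
    -- entry is (Fin.cons (stdb i) (fun k' => iteratedDeriv k' m t)) j k... careful with order
    refine Fin.cases ?_ ?_ j
    · exact contDiff_const
    · intro l
      exact contDiff_pi.mp (hA l) k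
  have hσs : ContDiff ℝ ∞ σ := by
    rw [hσeq]; exact hφ'.smul hL
  -- derivative facts
  have hderA : ∀ (k : ℕ) (t : ℝ), HasDerivAt (iteratedDeriv k m) (iteratedDeriv (k + 1) m t) t := by
    intro k t
    rw [iteratedDeriv_succ]
    exact ((hA k).differentiable (by simp)).differentiableAt.hasDerivAt
  have hderσ : ∀ t : ℝ, HasDerivAt σ (deriv σ t) t :=
    fun t => (hσs.differentiable (by simp)).differentiableAt.hasDerivAt
  have hσ1s : ContDiff ℝ ∞ (deriv σ) := (contDiff_infty_iff_deriv.mp hσs).2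
  have hderσ' : ∀ t : ℝ, HasDerivAt (deriv σ) (iteratedDeriv 2 σ t) t := by
    intro t
    have : iteratedDeriv 2 σ = deriv (deriv σ) := by
      rw [show (2 : ℕ) = 1 + 1 from rfl, iteratedDeriv_succ, iteratedDeriv_one]
    rw [this]
    exact (hσ1s.differentiable (by simp)).differentiableAt.hasDerivAt
  -- orthogonality of iterated derivatives with σ
  have O : ∀ (k : Fin 4) (t : ℝ), mink5 (iteratedDeriv (k : ℕ) m t) (σ t) = 0 := by
    intro k t
    rw [hσ t, mink5_smul]
    rw [mink5_lorentzProd_self (fun k : Fin 4 => iteratedDeriv (k : ℕ) m t) k]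
    ring
  -- zero-derivative principle
  have zd : ∀ (F : ℝ → ℝ) (d t : ℝ), (∀ s, F s = 0) → HasDerivAt F d t → d = 0 := by
    intro F d t hF hd
    have hF' : F = fun _ => (0 : ℝ) := funext hF
    rw [hF'] at hd
    exact hd.unique (hasDerivAt_const t 0)
  -- ⟨m, σ'⟩ = 0
  have P1 : ∀ t, mink5 (m t) (deriv σ t) = 0 := by
    intro t
    have h := hasDerivAt_mink5 (hderA 0 t) (hderσ t)
    have h0 := zd _ _ t (fun s => by simpa [iteratedDeriv_zero] using O 0 s) (by simpa [iteratedDeriv_zero] using h)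
    have h1 : mink5 (deriv m t) (σ t) = 0 := by
      simpa [iteratedDeriv_one] using O 1 t
    linarith [h0, h1]
  -- ⟨m', σ'⟩ = 0
  have Q1 : ∀ t, mink5 (iteratedDeriv 1 m t) (deriv σ t) = 0 := by
    intro t
    have h := hasDerivAt_mink5 (hderA 1 t) (hderσ t)
    have h0 := zd _ _ t (fun s => O 1 s) h
    have h2 : mink5 (iteratedDeriv 2 m t) (σ t) = 0 := O 2 t
    linarith [h0, h2]
  -- ⟨m, σ''⟩ = 0
  have P2 : ∀ t, mink5 (m t) (iteratedDeriv 2 σ t) = 0 := by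
    intro t
    have h := hasDerivAt_mink5 (hderA 0 t) (hderσ' t)
    have h0 := zd _ _ t (fun s => by simpa [iteratedDeriv_zero] using P1 s)
      (by simpa [iteratedDeriv_zero] using h)
    have h1 : mink5 (deriv m t) (deriv σ t) = 0 := by
      simpa [iteratedDeriv_one] using Q1 t
    linarith [h0, h1]
  have main : ∀ t : ℝ, mink5 (m t) (σ t + iteratedDeriv 2 σ t) = 0 := by
    intro t
    rw [mink5_add_right]
    have := O 0 t
    rw [show ((0 : Fin 4) : ℕ) = 0 from rfl, iteratedDeriv_zero] at this
    rw [this, P2 t, add_zero]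
  refine ⟨main, ?_⟩
  intro t hmt hne hlk
  exact lightlike_orthogonal (m t) (σ t + iteratedDeriv 2 σ t) (hlight t) hlk (main t) hmt hne
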